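/- For the ideal I = ⟨x^{35}, x^{33}y^2, x^4y^{26}, y^{28}⟩ ⊂ K[x,y], the monomial x^{13}y^{22} belongs to the Ratliff-Rush closure Ĩ = ∪_{m≥1}(I^{m+1} : I^m) but not to I; in particular I is not Ratliff-Rush. -/

import Mathlib

open MvPolynomial Pointwise

/-- The Ratliff-Rush closure of an ideal, as a set: `∪_{m≥1} (I^{m+1} : I^m)`. -/
def ratliffRushClosure {R : Type*} [CommRing R] (I : Ideal R) : Set R :=
  {x | ∃ m : ℕ, 1 ≤ m ∧ x ∈ (I ^ (m + 1)).colon ((I ^ m : Ideal R) : Set R)}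

/-- Arithmetic witness lemma: any 11-fold product of generators, multiplied by
`x^13 y^22`, is divisible by a 12-fold product of generators. -/
lemma rr_witness (a b c d : ℕ) (h : a + b + c + d = 11) :
    ∃ a' b' c' d' : ℕ, a' + b' + c' + d' = 12 ∧
      35*a' + 33*b' + 4*c' ≤ 13 + (35*a + 33*b + 4*c) ∧
      2*b' + 26*c' + 28*d' ≤ 22 + (2*b + 26*c + 28*d) := by
  by_cases hd : 2 ≤ d
  · exact ⟨a, b, c+3, d-2, by omega, by omega, by omega⟩
  by_cases hb : 2 ≤ b
  · exact ⟨a+2, b-2, c+1, d, by omega, by omega, by omega⟩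
  by_cases hbd : 1 ≤ b ∧ 1 ≤ d
  · exact ⟨a+1, b-1, c+2, d-1, by omega, by omega, by omega⟩
  by_cases hc : 5 ≤ c
  · exact ⟨a, b+1, c-5, d+5, by omega, by omega, by omega⟩
  by_cases hc2 : 2 ≤ c
  · exact ⟨a-6, b+7, c-2, d+2, by omega, by omega, by omega⟩
  by_cases hc1 : 1 ≤ c
  · exact ⟨a-8, b+9, c-1, d+1, by omega, by omega, by omega⟩
  · exact ⟨a-10, b+11, c, d, by omega, by omega, by omega⟩

/-- Structure of elements of the `n`-th set power of the generating set. -/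
lemma rr_mem_pow {K : Type*} [Field K] :
    ∀ (n : ℕ) (p : MvPolynomial (Fin 2) K),
      p ∈ ({(X 0 : MvPolynomial (Fin 2) K) ^ 35, X 0 ^ 33 * X 1 ^ 2,
            X 0 ^ 4 * X 1 ^ 26, (X 1 : MvPolynomial (Fin 2) K) ^ 28} : Set (MvPolynomial (Fin 2) K)) ^ n →
      ∃ a b c d : ℕ, a + b + c + d = n ∧
        p = X 0 ^ (35*a + 33*b + 4*c) * X 1 ^ (2*b + 26*c + 28*d) := by
  intro n
  induction n with
  | zero =>
    intro p hp
    rw [pow_zero, Set.mem_one] at hp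
    exact ⟨0, 0, 0, 0, rfl, by simp [hp]⟩
  | succ n ih =>
    intro p hp
    rw [pow_succ] at hp
    rcases Set.mem_mul.mp hp with ⟨x, hx, y, hy, rfl⟩
    obtain ⟨a, b, c, d, hsum, rfl⟩ := ih x hx
    simp only [Set.mem_insert_iff, Set.mem_singleton_iff] at hy
    rcases hy with h | h | h | h <;> rw [h]
    · exact ⟨a+1, b, c, d, by omega, by ring⟩
    · exact ⟨a, b+1, c, d, by omega, by ring⟩
    · exact ⟨a, b, c+1, d, by omega, by ring⟩
    · exact ⟨a, b, c, d+1, by omega, by ring⟩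

theorem example_not_ratliffRush (K : Type*) [Field K] :
    (MvPolynomial.X 0 ^ 13 * MvPolynomial.X 1 ^ 22 ∈
      ratliffRushClosure (Ideal.span {(MvPolynomial.X 0 : MvPolynomial (Fin 2) K) ^ 35,
        MvPolynomial.X 0 ^ 33 * MvPolynomial.X 1 ^ 2,
        MvPolynomial.X 0 ^ 4 * MvPolynomial.X 1 ^ 26,
        (MvPolynomial.X 1 : MvPolynomial (Fin 2) K) ^ 28})) ∧
    (MvPolynomial.X 0 ^ 13 * MvPolynomial.X 1 ^ 22 ∉
      Ideal.span {(MvPolynomial.X 0 : MvPolynomial (Fin 2) K) ^ 35,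
        MvPolynomial.X 0 ^ 33 * MvPolynomial.X 1 ^ 2,
        MvPolynomial.X 0 ^ 4 * MvPolynomial.X 1 ^ 26,
        (MvPolynomial.X 1 : MvPolynomial (Fin 2) K) ^ 28}) := by
  set S : Set (MvPolynomial (Fin 2) K) :=
    {(X 0 : MvPolynomial (Fin 2) K) ^ 35, X 0 ^ 33 * X 1 ^ 2,
     X 0 ^ 4 * X 1 ^ 26, (X 1 : MvPolynomial (Fin 2) K) ^ 28} with hS
  set I : Ideal (MvPolynomial (Fin 2) K) := Ideal.span S with hI
  constructor
  · refine ⟨11, by norm_num, ?_⟩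
    rw [Submodule.mem_colon]
    intro p hp
    rw [smul_eq_mul]
    have hpow : I ^ 11 = Ideal.span (S ^ 11) := Submodule.span_pow S 11
    rw [hpow] at hp
    refine Submodule.span_induction ?_ ?_ ?_ ?_ hp
    · intro q hq
      obtain ⟨a, b, c, d, hsum, rfl⟩ := rr_mem_pow 11 q hq
      obtain ⟨a', b', c', d', hsum', hx, hy⟩ := rr_witness a b c d hsum
      obtain ⟨e, he⟩ := Nat.le.dest hx
      obtain ⟨f, hf⟩ := Nat.le.dest hy
      have key : (X 0 : MvPolynomial (Fin 2) K) ^ 13 * X 1 ^ 22 *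
          (X 0 ^ (35*a + 33*b + 4*c) * X 1 ^ (2*b + 26*c + 28*d)) =
          (X 0 ^ e * X 1 ^ f) *
          ((X 0 ^ 35) ^ a' * (X 0 ^ 33 * X 1 ^ 2) ^ b' *
           (X 0 ^ 4 * X 1 ^ 26) ^ c' * (X 1 ^ 28) ^ d') := by
        have e1 : (X 0 : MvPolynomial (Fin 2) K) ^ 13 * X 1 ^ 22 *
            (X 0 ^ (35*a + 33*b + 4*c) * X 1 ^ (2*b + 26*c + 28*d)) =
            X 0 ^ (13 + (35*a + 33*b + 4*c)) * X 1 ^ (22 + (2*b + 26*c + 28*d)) := by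
          ring
        have e2 : (X 0 : MvPolynomial (Fin 2) K) ^ e * X 1 ^ f *
            ((X 0 ^ 35) ^ a' * (X 0 ^ 33 * X 1 ^ 2) ^ b' *
             (X 0 ^ 4 * X 1 ^ 26) ^ c' * (X 1 ^ 28) ^ d') =
            X 0 ^ (35*a' + 33*b' + 4*c' + e) * X 1 ^ (2*b' + 26*c' + 28*d' + f) := by
          ring
        rw [e1, e2, he, hf]
      rw [key]
      apply Ideal.mul_mem_left
      have h1 : (X 0 : MvPolynomial (Fin 2) K) ^ 35 ∈ I := Ideal.subset_span (by simp [hS])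
      have h2 : (X 0 : MvPolynomial (Fin 2) K) ^ 33 * X 1 ^ 2 ∈ I :=
        Ideal.subset_span (by simp [hS])
      have h3 : (X 0 : MvPolynomial (Fin 2) K) ^ 4 * X 1 ^ 26 ∈ I :=
        Ideal.subset_span (by simp [hS])
      have h4 : (X 1 : MvPolynomial (Fin 2) K) ^ 28 ∈ I := Ideal.subset_span (by simp [hS])
      have : ((X 0 : MvPolynomial (Fin 2) K) ^ 35) ^ a' * (X 0 ^ 33 * X 1 ^ 2) ^ b' *
          (X 0 ^ 4 * X 1 ^ 26) ^ c' * (X 1 ^ 28) ^ d' ∈ I ^ (a' + b' + c' + d') := by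
        rw [pow_add, pow_add, pow_add]
        exact Submodule.mul_mem_mul (Submodule.mul_mem_mul
          (Submodule.mul_mem_mul (Ideal.pow_mem_pow h1 a') (Ideal.pow_mem_pow h2 b'))
          (Ideal.pow_mem_pow h3 c')) (Ideal.pow_mem_pow h4 d')
      rwa [hsum'] at this
    · simp
    · intro x y _ _ hx hy
      rw [mul_add]
      exact Ideal.add_mem _ hx hy
    · intro r x _ hx
      rw [smul_eq_mul, mul_comm r x, ← mul_assoc]
      exact Ideal.mul_mem_right r _ hx
  · intro hmem
    have hSimg : S = (fun s => monomial s (1 : K)) ''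
        ({Finsupp.single 0 35, Finsupp.single 0 33 + Finsupp.single 1 2,
          Finsupp.single 0 4 + Finsupp.single 1 26,
          Finsupp.single 1 28} : Set (Fin 2 →₀ ℕ)) := by
      simp only [Set.image_insert_eq, Set.image_singleton, hS]
      rw [X_pow_eq_monomial, X_pow_eq_monomial, X_pow_eq_monomial, X_pow_eq_monomial,
        X_pow_eq_monomial, X_pow_eq_monomial, monomial_mul, monomial_mul, one_mul]
    rw [hI, hSimg] at hmem
    have hz : (X 0 : MvPolynomial (Fin 2) K) ^ 13 * X 1 ^ 22 =
        monomial (Finsupp.single 0 13 + Finsupp.single 1 22) (1 : K) := by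
      rw [X_pow_eq_monomial, X_pow_eq_monomial, monomial_mul, one_mul]
    rw [hz] at hmem
    have := mem_ideal_span_monomial_image.mp hmem
      (Finsupp.single 0 13 + Finsupp.single 1 22) (by
        classical
        rw [support_monomial, if_neg one_ne_zero]
        simp)
    obtain ⟨s, hs, hle⟩ := this
    simp only [Set.mem_insert_iff, Set.mem_singleton_iff] at hs
    rcases hs with rfl | rfl | rfl | rfl
    · have := Finsupp.le_def.mp hle 0
      simp [Finsupp.single_apply] at this
    · have := Finsupp.le_def.mp hle 0
      simp [Finsupp.single_apply] at this
    · have := Finsupp.le_def.mp hle 1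
      simp [Finsupp.single_apply] at this
    · have := Finsupp.le_def.mp hle 1
      simp [Finsupp.single_apply] at this
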